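/- arXiv:1502.05765 — 4 statements merged into one kernel-verified Lean document; each statement's English description precedes it below -/
import Mathlib

section
/- In the abstract Signorini-problem setting below, the solution u of the gradient scheme satisfies, for every v_D ∈ K_D, the intermediate estimate ‖∇_D v_D − ∇_D u‖_{L²(μ;ℝ^d)} ≤ sqrt( (2/λ̲) G_D(ū, v_D)⁺ + (1/λ̲²) (W + λ̄ S_D(ū, v_D))² ). (Inequality (5.8) established in the proof of Theorem 2.4, in the L²-boundary setting.) -/
/-!
Test the coercivity of `Λ` on `e = ∇_D (v_D - u)` and split
`Λ ∇_D v_D = Λ (∇_D v_D - G) + Λ G`. The first piece is bounded by `λ̄ ‖∇_D v_D - G‖ ‖e‖`;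
the scheme inequality replaces the `Λ ∇_D u` term by `∫ f Π (v_D - u)`; what remains is the
limit-conformity functional at `v_D - u`, bounded by `W ‖e‖`, plus the boundary term
`⟨φ, T (v_D - u)⟩`, which is at most `G_D(ū, v_D)⁺` because the Signorini conditions make
`φ (T u - b) ≥ 0` for `u ∈ K_D`. Solving `λ̲ ‖e‖² ≤ G_D⁺ + (W + λ̄ S_D) ‖e‖` for `‖e‖` gives
the estimate. The supremum `W` is finite since `X` is finite-dimensional and `∇_D` injective.
-/

open MeasureTheory
open scoped InnerProductSpace ENNReal

namespace ContinuousLinearMap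

variable {𝕜 E : Type*} [RCLike 𝕜] [NormedAddCommGroup E] [InnerProductSpace 𝕜 E]

theorem norm_le_of_isSymmetric_of_abs_re_inner_le {T : E →L[𝕜] E} (hT : T.IsSymmetric)
    {C : ℝ} (hC : 0 ≤ C) (h : ∀ x, |RCLike.re ⟪T x, x⟫_𝕜| ≤ C * ‖x‖ ^ 2) : ‖T‖ ≤ C := by
  rw [T.norm_eq_iSup_rayleighQuotient hT]
  refine ciSup_le fun x => ?_
  rcases eq_or_ne x 0 with rfl | hx
  · simpa using hC
  · rw [rayleighQuotient, reApplyInnerSelf_apply, abs_div, abs_sq, div_le_iff₀ (by positivity)]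
    exact h x

end ContinuousLinearMap

theorem Matrix.norm_toEuclideanCLM_le_of_isSymm {n : Type*} [Fintype n] [DecidableEq n]
    {A : Matrix n n ℝ} (hA : A.IsSymm) {C : ℝ} (hC : 0 ≤ C)
    (h : ∀ ξ : EuclideanSpace ℝ n,
      0 ≤ ⟪toEuclideanLin A ξ, ξ⟫_ℝ ∧ ⟪toEuclideanLin A ξ, ξ⟫_ℝ ≤ C * ‖ξ‖ ^ 2) :
    ‖toEuclideanCLM (𝕜 := ℝ) A‖ ≤ C := by
  refine ContinuousLinearMap.norm_le_of_isSymmetric_of_abs_re_inner_le ?_ hC fun ξ => ?_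
  · rw [coe_toEuclideanCLM_eq_toEuclideanLin, isSymmetric_toEuclideanLin_iff]
    exact isHermitian_iff_isSymm.mpr hA
  · change |⟪toEuclideanLin A ξ, ξ⟫_ℝ| ≤ C * ‖ξ‖ ^ 2
    exact abs_le.mpr ⟨by linarith [(h ξ).1, mul_nonneg hC (sq_nonneg ‖ξ‖)], (h ξ).2⟩

theorem Matrix.aestronglyMeasurable_toEuclideanCLM {α : Type*} [MeasurableSpace α] {μ : Measure α}
    {n : Type*} [Fintype n] [DecidableEq n] {A : α → Matrix n n ℝ}
    (hA : Measurable fun x i j => A x i j) :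
    AEStronglyMeasurable (fun x => toEuclideanCLM (𝕜 := ℝ) (A x)) μ :=
  (LinearMap.continuous_of_finiteDimensional
    (toEuclideanCLM (n := n) (𝕜 := ℝ)).toAlgEquiv.toLinearMap).comp_aestronglyMeasurable
    hA.aestronglyMeasurable

namespace MeasureTheory

variable {α : Type*} [MeasurableSpace α] {μ : Measure α}

theorem L2.real_inner_eq_integral_mul (p q : Lp ℝ 2 μ) : ⟪p, q⟫_ℝ = ∫ x, p x * q x ∂μ := by
  simp only [L2.inner_def, Real.inner_apply]

theorem L2.real_inner_sub_eq_integral (φ p q : Lp ℝ 2 μ) :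
    ⟪φ, p - q⟫_ℝ = ∫ x, φ x * (p x - q x) ∂μ := by
  rw [L2.real_inner_eq_integral_mul]
  refine integral_congr_ae ?_
  filter_upwards [Lp.coeFn_sub p q] with x hx
  rw [hx, Pi.sub_apply]

namespace MemLp

section Lp

variable {𝕜 E : Type*} [NontriviallyNormedField 𝕜] [NormedAddCommGroup E] [NormedSpace 𝕜 E]
  {A : α → E →L[𝕜] E} (hA : MemLp A ∞ μ) (p : ℝ≥0∞) [Fact (1 ≤ p)]

/-- The multiplication operator `g ↦ (x ↦ A x (g x))` on `Lp E p μ`. -/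
noncomputable def applyLp : Lp E p μ →L[𝕜] Lp E p μ :=
  (ContinuousLinearMap.id 𝕜 (E →L[𝕜] E)).holderL μ ∞ p p (hA.toLp A)

theorem coeFn_applyLp (g : Lp E p μ) : hA.applyLp p g =ᵐ[μ] fun x => A x (g x) := by
  filter_upwards [(ContinuousLinearMap.id 𝕜 (E →L[𝕜] E)).coeFn_holder (r := p) (hA.toLp A) g,
    hA.coeFn_toLp] with x hx hAx
  simp [applyLp, hx, hAx]

theorem norm_applyLp_le {C : ℝ} (hC : 0 ≤ C) (hAC : ∀ᵐ x ∂μ, ‖A x‖ ≤ C) :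
    ‖hA.applyLp p‖ ≤ C := by
  refine ContinuousLinearMap.opNorm_le_bound _ hC fun g => ?_
  have hAnorm : ‖hA.toLp A‖ ≤ C := by
    rw [Lp.norm_toLp, eLpNorm_exponent_top]
    exact ENNReal.toReal_le_of_le_ofReal hC (eLpNormEssSup_le_of_ae_bound hAC)
  calc ‖hA.applyLp p g‖
      ≤ ‖ContinuousLinearMap.id 𝕜 (E →L[𝕜] E)‖ * ‖hA.toLp A‖ * ‖g‖ :=
        ContinuousLinearMap.norm_holder_apply_apply_le _ _ _
    _ ≤ 1 * C * ‖g‖ := by gcongr; exact ContinuousLinearMap.norm_id_le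
    _ = C * ‖g‖ := by ring

end Lp

section L2

variable {E : Type*} [NormedAddCommGroup E] [InnerProductSpace ℝ E]
  {A : α → E →L[ℝ] E} (hA : MemLp A ∞ μ)

theorem inner_applyLp (g h : Lp E 2 μ) :
    ⟪hA.applyLp 2 g, h⟫_ℝ = ∫ x, ⟪A x (g x), h x⟫_ℝ ∂μ := by
  rw [L2.inner_def]
  refine integral_congr_ae ?_
  filter_upwards [hA.coeFn_applyLp 2 g] with x hx
  rw [hx]

theorem integral_inner_applyLp_sub_mul (g G : Lp E 2 μ) (p f : Lp ℝ 2 μ) :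
    ∫ x, (⟪g x, A x (G x)⟫_ℝ - p x * f x) ∂μ = ⟪hA.applyLp 2 G, g⟫_ℝ - ⟪f, p⟫_ℝ := by
  have hAG : (fun x => ⟪g x, A x (G x)⟫_ℝ) =ᵐ[μ] fun x => ⟪g x, hA.applyLp 2 G x⟫_ℝ := by
    filter_upwards [hA.coeFn_applyLp 2 G] with x hx
    rw [hx]
  rw [integral_sub ((L2.integrable_inner g _).congr hAG.symm)
      ((L2.integrable_inner (𝕜 := ℝ) p f).congr (.of_forall fun x => Real.inner_apply _ _)),
    integral_congr_ae hAG, ← L2.inner_def, real_inner_comm, L2.real_inner_eq_integral_mul f,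
    integral_congr_ae (.of_forall fun x => mul_comm (f x) (p x))]

theorem mul_norm_sq_le_inner_applyLp {c : ℝ} (hAc : ∀ᵐ x ∂μ, ∀ ξ, c * ‖ξ‖ ^ 2 ≤ ⟪A x ξ, ξ⟫_ℝ)
    (g : Lp E 2 μ) : c * ‖g‖ ^ 2 ≤ ⟪hA.applyLp 2 g, g⟫_ℝ := by
  rw [← real_inner_self_eq_norm_sq, L2.inner_def, L2.inner_def, ← integral_const_mul]
  refine integral_mono_ae ((L2.integrable_inner g g).const_mul c) (L2.integrable_inner _ _) ?_
  filter_upwards [hA.coeFn_applyLp 2 g, hAc] with x hx hxc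
  rw [hx, real_inner_self_eq_norm_sq]
  exact hxc (g x)

end L2

end MemLp

theorem signorini_inner_trace_sub_le {B : Type*} [MeasurableSpace B] {ν : Measure B}
    {Γ₁ Γ₂ Γ₃ : Set B} (hΓ : Γ₁ ∪ Γ₂ ∪ Γ₃ = Set.univ)
    {a b φ τu τv : Lp ℝ 2 ν}
    (hsig : ∀ᵐ x ∂ν, (x ∈ Γ₁ → b x = 0) ∧ (x ∈ Γ₂ → φ x = 0) ∧
        (x ∈ Γ₃ → φ x ≤ 0 ∧ φ x * (a x - b x) = 0))
    (hτ₁ : ∀ᵐ x ∂ν, x ∈ Γ₁ → τu x = 0) (hτ₃ : ∀ᵐ x ∂ν, x ∈ Γ₃ → τu x ≤ a x) :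
    ⟪φ, τv - τu⟫_ℝ ≤ max 0 (∫ x, φ x * (τv x - b x) ∂ν) := by
  have hu : 0 ≤ ⟪φ, τu - b⟫_ℝ := by
    rw [L2.real_inner_sub_eq_integral]
    refine integral_nonneg_of_ae ?_
    filter_upwards [hsig, hτ₁, hτ₃] with x ⟨hb₁, hφ₂, h₃⟩ h₁ h₃'
    rw [Pi.zero_apply]
    have hx : x ∈ Γ₁ ∪ Γ₂ ∪ Γ₃ := hΓ ▸ Set.mem_univ x
    rcases hx with (hx | hx) | hx
    · simp [h₁ hx, hb₁ hx]
    · simp [hφ₂ hx]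
    · obtain ⟨hφ, hcomp⟩ := h₃ hx
      nlinarith [h₃' hx]
  have hsplit : ⟪φ, τv - τu⟫_ℝ = ⟪φ, τv - b⟫_ℝ - ⟪φ, τu - b⟫_ℝ := by
    rw [← inner_sub_right, sub_sub_sub_cancel_right]
  rw [hsplit, L2.real_inner_sub_eq_integral φ τv b]
  linarith [le_max_right 0 (∫ x, φ x * (τv x - b x) ∂ν)]

end MeasureTheory

namespace LinearMap

variable {X F : Type*} [AddCommGroup X] [Module ℝ X] [FiniteDimensional ℝ X]
  [NormedAddCommGroup F] [NormedSpace ℝ F] {g : X →ₗ[ℝ] F}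

theorem exists_abs_le_mul_norm_of_injective (L : X →ₗ[ℝ] ℝ) (hg : Function.Injective g) :
    ∃ C, ∀ v, |L v| ≤ C * ‖g v‖ := by
  let e := LinearEquiv.ofInjective g hg
  let L' := (L ∘ₗ e.symm.toLinearMap).toContinuousLinearMap
  refine ⟨‖L'‖, fun v => ?_⟩
  have hv : L v = L' (e v) := by simp [L']
  rw [hv, ← Real.norm_eq_abs]
  exact L'.le_opNorm (e v)

theorem abs_le_iSup_abs_div_norm_mul (L : X →ₗ[ℝ] ℝ) (hg : Function.Injective g) (v : X) :
    |L v| ≤ (⨆ w : {w : X // w ≠ 0}, |L w| / ‖g w‖) * ‖g v‖ := by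
  have hpos : ∀ w : {w : X // w ≠ 0}, 0 < ‖g w‖ := fun w =>
    norm_pos_iff.mpr ((map_ne_zero_iff g hg).mpr w.2)
  obtain ⟨C, hC⟩ := exists_abs_le_mul_norm_of_injective L hg
  have hbdd : BddAbove (Set.range fun w : {w : X // w ≠ 0} => |L w| / ‖g w‖) :=
    ⟨C, Set.forall_mem_range.mpr fun w => (div_le_iff₀ (hpos w)).mpr (hC w)⟩
  rcases eq_or_ne v 0 with rfl | hv
  · simp
  · rw [← div_le_iff₀ (hpos ⟨v, hv⟩)]
    exact le_ciSup hbdd ⟨v, hv⟩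

end LinearMap

theorem le_sqrt_of_mul_sq_le_add_mul {l A c t : ℝ} (hl : 0 < l) (h : l * t ^ 2 ≤ A + c * t) :
    t ≤ √(2 / l * A + 1 / l ^ 2 * c ^ 2) := by
  refine Real.le_sqrt_of_sq_le ?_
  have hsq : (l * t) ^ 2 ≤ 2 * l * A + c ^ 2 := by nlinarith [sq_nonneg (c - l * t)]
  calc t ^ 2 = (l * t) ^ 2 / l ^ 2 := by field_simp
    _ ≤ (2 * l * A + c ^ 2) / l ^ 2 := by gcongr
    _ = 2 / l * A + 1 / l ^ 2 * c ^ 2 := by field_simp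

theorem ContinuousLinearMap.norm_sub_le_sqrt_of_coercive {H : Type*} [NormedAddCommGroup H]
    [InnerProductSpace ℝ H] {A : H →L[ℝ] H} {c C : ℝ} (hc : 0 < c)
    (hcoer : ∀ g, c * ‖g‖ ^ 2 ≤ ⟪A g, g⟫_ℝ) (hA : ‖A‖ ≤ C) {x y G : H} {r β W γ s : ℝ}
    (hsch : r ≤ ⟪A y, x - y⟫_ℝ) (hW : ⟪A G, x - y⟫_ℝ - r - β ≤ W * ‖x - y‖) (hβ : β ≤ γ)
    (hs : ‖x - G‖ ≤ s) :
    ‖x - y‖ ≤ √(2 / c * γ + 1 / c ^ 2 * (W + C * s) ^ 2) := by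
  refine le_sqrt_of_mul_sq_le_add_mul hc ?_
  have hsplit :
      ⟪A (x - y), x - y⟫_ℝ = ⟪A (x - G), x - y⟫_ℝ + ⟪A G, x - y⟫_ℝ - ⟪A y, x - y⟫_ℝ := by
    simp only [map_sub, inner_sub_left]; ring
  have hbound : ⟪A (x - G), x - y⟫_ℝ ≤ C * s * ‖x - y‖ :=
    calc ⟪A (x - G), x - y⟫_ℝ ≤ ‖A (x - G)‖ * ‖x - y‖ := real_inner_le_norm _ _
      _ ≤ ‖A‖ * ‖x - G‖ * ‖x - y‖ := by gcongr; exact A.le_opNorm _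
      _ ≤ C * s * ‖x - y‖ := by gcongr; exact (norm_nonneg A).trans hA
  linarith [hcoer (x - y)]

theorem signorini_gradient_scheme_intermediate_estimate_general
    {Ω : Type*} [MeasurableSpace Ω] (μ : Measure Ω)
    {B : Type*} [MeasurableSpace B] (ν : Measure B)
    (Γ₁ Γ₂ Γ₃ : Set B)
    (hΓunion : Γ₁ ∪ Γ₂ ∪ Γ₃ = Set.univ)
    (d : ℕ)
    (X : Type*) [AddCommGroup X] [Module ℝ X] [FiniteDimensional ℝ X]
    (Pi : X →ₗ[ℝ] Lp ℝ 2 μ)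
    (T : X →ₗ[ℝ] Lp ℝ 2 ν)
    (gradD : X →ₗ[ℝ] Lp (EuclideanSpace ℝ (Fin d)) 2 μ)
    (hgradD : Function.Injective gradD)
    (hT₁ : ∀ v : X, ∀ᵐ x ∂ν, x ∈ Γ₁ → (T v) x = 0)
    (Λ : Ω → Matrix (Fin d) (Fin d) ℝ) (hΛmeas : Measurable fun x i j => Λ x i j)
    (lamlo lamhi : ℝ) (hlamlo : 0 < lamlo) (hlam : lamlo ≤ lamhi)
    (hΛ : ∀ᵐ x ∂μ, (Λ x).IsSymm ∧ ∀ ξ : EuclideanSpace ℝ (Fin d),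
        lamlo * ‖ξ‖ ^ 2 ≤ (inner ℝ (Matrix.toEuclideanLin (Λ x) ξ) ξ : ℝ) ∧
        (inner ℝ (Matrix.toEuclideanLin (Λ x) ξ) ξ : ℝ) ≤ lamhi * ‖ξ‖ ^ 2)
    (f uBar : Lp ℝ 2 μ) (G : Lp (EuclideanSpace ℝ (Fin d)) 2 μ)
    (a b phi : Lp ℝ 2 ν)
    (hsig : ∀ᵐ x ∂ν, (x ∈ Γ₁ → b x = 0) ∧ (x ∈ Γ₂ → phi x = 0) ∧
        (x ∈ Γ₃ → b x ≤ a x ∧ phi x ≤ 0 ∧ phi x * (a x - b x) = 0))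
    (KD : Set X)
    (hKD : KD = {v : X | ∀ᵐ x ∂ν, x ∈ Γ₃ → (T v) x ≤ a x})
    (u : X) (hu : u ∈ KD)
    (hscheme : ∀ v ∈ KD,
      ∫ x, (inner ℝ (Matrix.toEuclideanLin (Λ x) ((gradD u) x)) ((gradD (u - v)) x) : ℝ) ∂μ
        ≤ ∫ x, (f x) * ((Pi (u - v)) x) ∂μ)
    (vD : X) (hvD : vD ∈ KD) :
    ‖gradD vD - gradD u‖ ≤
      Real.sqrt
        ((2 / lamlo) * max 0 (∫ y, phi y * ((T vD) y - b y) ∂ν)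
          + (1 / lamlo ^ 2) *
            ((⨆ v : {v : X // v ≠ 0},
                |(∫ x, ((inner ℝ ((gradD v.1) x) (Matrix.toEuclideanLin (Λ x) (G x)) : ℝ)
                      - (Pi v.1) x * f x) ∂μ)
                  - ∫ y, phi y * (T v.1) y ∂ν| / ‖gradD v.1‖)
              + lamhi * (‖Pi vD - uBar‖ + ‖gradD vD - G‖)) ^ 2) := by
  subst hKD
  simp only [← Matrix.coe_toEuclideanCLM_eq_toEuclideanLin (𝕜 := ℝ), ContinuousLinearMap.coe_coe]
    at hΛ hscheme ⊢
  have hlamhi : 0 ≤ lamhi := hlamlo.le.trans hlam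
  have hΛbound : ∀ᵐ x ∂μ, ‖Matrix.toEuclideanCLM (𝕜 := ℝ) (Λ x)‖ ≤ lamhi :=
    hΛ.mono fun x hx => Matrix.norm_toEuclideanCLM_le_of_isSymm hx.1 hlamhi fun ξ =>
      ⟨(mul_nonneg hlamlo.le (sq_nonneg ‖ξ‖)).trans (hx.2 ξ).1, (hx.2 ξ).2⟩
  have hΛmem : MemLp (fun x => Matrix.toEuclideanCLM (𝕜 := ℝ) (Λ x)) ∞ μ :=
    memLp_top_of_bound (Matrix.aestronglyMeasurable_toEuclideanCLM hΛmeas) lamhi hΛbound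
  set A := hΛmem.applyLp 2
  let L : X →ₗ[ℝ] ℝ := innerₛₗ ℝ (A G) ∘ₗ gradD - innerₛₗ ℝ f ∘ₗ Pi - innerₛₗ ℝ phi ∘ₗ T
  have hL (v : X) : (∫ x, (⟪gradD v x, Matrix.toEuclideanCLM (𝕜 := ℝ) (Λ x) (G x)⟫_ℝ
      - Pi v x * f x) ∂μ) - ∫ y, phi y * T v y ∂ν = L v := by
    rw [hΛmem.integral_inner_applyLp_sub_mul, ← L2.real_inner_eq_integral_mul]; rfl
  simp only [hL]
  have hW : ⟪A G, gradD (vD - u)⟫_ℝ - ⟪f, Pi (vD - u)⟫_ℝ - ⟪phi, T (vD - u)⟫_ℝ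
      ≤ _ * ‖gradD (vD - u)‖ :=
    (le_abs_self _).trans (LinearMap.abs_le_iSup_abs_div_norm_mul L hgradD (vD - u))
  have hsch := hscheme vD hvD
  rw [← hΛmem.inner_applyLp, ← L2.real_inner_eq_integral_mul, ← neg_sub vD, map_neg, map_neg,
    inner_neg_right, inner_neg_right, neg_le_neg_iff] at hsch
  simp only [map_sub] at hW hsch
  exact A.norm_sub_le_sqrt_of_coercive hlamlo
    (hΛmem.mul_norm_sq_le_inner_applyLp (hΛ.mono fun x hx ξ => (hx.2 ξ).1))
    (hΛmem.norm_applyLp_le 2 hlamhi hΛbound) hsch hW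
    (signorini_inner_trace_sub_le hΓunion
      (hsig.mono fun _ h => ⟨h.1, h.2.1, fun hx => (h.2.2 hx).2⟩) (hT₁ u) hu)
    (le_add_of_nonneg_left (norm_nonneg _))

/-- **Intermediate estimate (5.8) in the proof of Theorem 2.4** (Signorini problem,
`L²`-boundary setting): for every `v_D ∈ K_D`, the gradient-scheme solution `u` satisfies
`‖∇_D v_D - ∇_D u‖ ≤ sqrt((2/λ̲) G_D(ū,v_D)⁺ + (1/λ̲²)(W + λ̄ S_D(ū,v_D))²)`. -/
theorem signorini_gradient_scheme_intermediate_estimate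
    {Ω : Type*} [MeasurableSpace Ω] (μ : Measure Ω)
    {B : Type*} [MeasurableSpace B] (ν : Measure B)
    (Γ₁ Γ₂ Γ₃ : Set B)
    (hΓmeas : MeasurableSet Γ₁ ∧ MeasurableSet Γ₂ ∧ MeasurableSet Γ₃)
    (hΓunion : Γ₁ ∪ Γ₂ ∪ Γ₃ = Set.univ)
    (hΓdisj : Disjoint Γ₁ Γ₂ ∧ Disjoint Γ₁ Γ₃ ∧ Disjoint Γ₂ Γ₃)
    (d : ℕ) (hd : 1 ≤ d)
    (X : Type*) [AddCommGroup X] [Module ℝ X] [FiniteDimensional ℝ X] [Nontrivial X]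
    (Pi : X →ₗ[ℝ] Lp ℝ 2 μ)
    (T : X →ₗ[ℝ] Lp ℝ 2 ν)
    (gradD : X →ₗ[ℝ] Lp (EuclideanSpace ℝ (Fin d)) 2 μ)
    (hgradD : Function.Injective gradD)
    (hT₁ : ∀ v : X, ∀ᵐ x ∂ν, x ∈ Γ₁ → (T v) x = 0)
    (Λ : Ω → Matrix (Fin d) (Fin d) ℝ) (hΛmeas : Measurable fun x i j => Λ x i j)
    (lamlo lamhi : ℝ) (hlamlo : 0 < lamlo) (hlam : lamlo ≤ lamhi)
    (hΛ : ∀ᵐ x ∂μ, (Λ x).IsSymm ∧ ∀ ξ : EuclideanSpace ℝ (Fin d),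
        lamlo * ‖ξ‖ ^ 2 ≤ (inner ℝ (Matrix.toEuclideanLin (Λ x) ξ) ξ : ℝ) ∧
        (inner ℝ (Matrix.toEuclideanLin (Λ x) ξ) ξ : ℝ) ≤ lamhi * ‖ξ‖ ^ 2)
    (f uBar : Lp ℝ 2 μ) (G : Lp (EuclideanSpace ℝ (Fin d)) 2 μ)
    (a b phi : Lp ℝ 2 ν)
    (hsig : ∀ᵐ x ∂ν, (x ∈ Γ₁ → b x = 0) ∧ (x ∈ Γ₂ → phi x = 0) ∧
        (x ∈ Γ₃ → b x ≤ a x ∧ phi x ≤ 0 ∧ phi x * (a x - b x) = 0))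
    (KD : Set X)
    (hKD : KD = {v : X | ∀ᵐ x ∂ν, x ∈ Γ₃ → (T v) x ≤ a x})
    (hKDne : KD.Nonempty)
    (u : X) (hu : u ∈ KD)
    (hscheme : ∀ v ∈ KD,
      ∫ x, (inner ℝ (Matrix.toEuclideanLin (Λ x) ((gradD u) x)) ((gradD (u - v)) x) : ℝ) ∂μ
        ≤ ∫ x, (f x) * ((Pi (u - v)) x) ∂μ)
    (vD : X) (hvD : vD ∈ KD) :
    ‖gradD vD - gradD u‖ ≤
      Real.sqrt
        ((2 / lamlo) * max 0 (∫ y, phi y * ((T vD) y - b y) ∂ν)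
          + (1 / lamlo ^ 2) *
            ((⨆ v : {v : X // v ≠ 0},
                |(∫ x, ((inner ℝ ((gradD v.1) x) (Matrix.toEuclideanLin (Λ x) (G x)) : ℝ)
                      - (Pi v.1) x * f x) ∂μ)
                  - ∫ y, phi y * (T v.1) y ∂ν| / ‖gradD v.1‖)
              + lamhi * (‖Pi vD - uBar‖ + ‖gradD vD - G‖)) ^ 2) :=
  signorini_gradient_scheme_intermediate_estimate_general μ ν Γ₁ Γ₂ Γ₃ hΓunion d X Pi T gradD hgradD
    hT₁ Λ hΛmeas lamlo lamhi hlamlo hlam hΛ f uBar G a b phi hsig KD hKD u hu hscheme vD hvD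
end

section
/- In the abstract Signorini-problem setting below, the solution u of the gradient scheme satisfies, for every v_D ∈ K_D, the gradient error estimate ‖∇_D u − G‖_{L²(μ;ℝ^d)} ≤ sqrt( (2/λ̲) G_D(ū, v_D)⁺ ) + (1/λ̲) [ W + (λ̄ + λ̲) S_D(ū, v_D) ]. (Estimate (2.7) of Theorem 2.4, in the L²-boundary setting.) -/
/-!
Let `A` be multiplication by `Λ` on `L²(μ; ℝ^d)`: a coercive operator (`⟪A H, H⟫ ≥ λ̲ ‖H‖²`) of
norm at most `λ̄`, which turns every integral of the statement into an `L²` inner product. Put `w = u - v_D`. Testing the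
scheme with `v_D` bounds `⟪A ∇_D u, ∇_D w⟫` by `∫ f Π w`; the limit-conformity defect replaces this
by `⟪A G, ∇_D w⟫ - ∫ φ T w` up to `W ‖∇_D w‖`; and the Signorini conditions give
`∫ φ (T u - b) ≥ 0`, hence `-∫ φ T w ≤ G_D(ū, v_D)⁺`. Coercivity and boundedness of `A` then give
`λ̲ t² ≤ G_D⁺ + (W + λ̄ ‖∇_D v_D - G‖) t` for `t = ‖∇_D w‖`, so
`t ≤ √(2 G_D⁺ / λ̲) + (W + λ̄ ‖∇_D v_D - G‖) / λ̲`, and the triangle inequality through `∇_D v_D`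
concludes.
-/

open MeasureTheory
open scoped ENNReal

theorem ContinuousLinearMap.norm_le_of_isSymmetric {𝕜 E : Type*} [RCLike 𝕜]
    [NormedAddCommGroup E] [InnerProductSpace 𝕜 E] {T : E →L[𝕜] E}
    (hT : (T : E →ₗ[𝕜] E).IsSymmetric) {c : ℝ} (hc : 0 ≤ c)
    (h : ∀ x, |RCLike.re (inner 𝕜 (T x) x)| ≤ c * ‖x‖ ^ 2) : ‖T‖ ≤ c := by
  rw [T.norm_eq_iSup_rayleighQuotient hT]
  refine ciSup_le fun x => ?_
  rcases eq_or_ne x 0 with rfl | hx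
  · simpa using hc
  · rw [rayleighQuotient, reApplyInnerSelf_apply, abs_div, abs_sq]
    exact div_le_of_le_mul₀ (by positivity) hc (h x)

theorem Matrix.norm_toEuclideanLin_apply_le {n : Type*} [Fintype n] [DecidableEq n]
    {M : Matrix n n ℝ} (hM : M.IsSymm) {c : ℝ} (hc : 0 ≤ c)
    (hpos : ∀ ξ, 0 ≤ inner ℝ (M.toEuclideanLin ξ) ξ)
    (hle : ∀ ξ, inner ℝ (M.toEuclideanLin ξ) ξ ≤ c * ‖ξ‖ ^ 2) (ξ : EuclideanSpace ℝ n) :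
    ‖M.toEuclideanLin ξ‖ ≤ c * ‖ξ‖ := by
  have hT : ‖toEuclideanCLM (𝕜 := ℝ) M‖ ≤ c :=
    ContinuousLinearMap.norm_le_of_isSymmetric
      (isSymmetric_toEuclideanLin_iff.mpr (isHermitian_iff_isSymm.mpr hM)) hc
      fun ξ => (abs_of_nonneg (hpos ξ)).trans_le (hle ξ)
  exact ((toEuclideanCLM (𝕜 := ℝ) M).le_opNorm ξ).trans (by gcongr)

theorem le_sqrt_add_div_of_mul_sq_le {lam c P t : ℝ} (hlam : 0 < lam) (hc : 0 ≤ c) (hP : 0 ≤ P)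
    (h : lam * t ^ 2 ≤ P + c * t) : t ≤ √(2 / lam * P) + c / lam := by
  set s := √(2 / lam * P)
  have hs : lam * s ^ 2 = 2 * P := by
    rw [Real.sq_sqrt (by positivity)]; field_simp
  by_contra! hlt
  have hgap : lam * s < lam * t - c := by
    have := mul_lt_mul_of_pos_left hlt hlam
    rw [mul_add, mul_div_cancel₀ _ hlam.ne'] at this
    linarith
  have hs0 : 0 ≤ s := Real.sqrt_nonneg _
  have hst : s < t := by linarith [div_nonneg hc hlam.le]
  have hpos : 0 < lam * t - c := (mul_nonneg hlam.le hs0).trans_lt hgap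
  -- t (lam t - c) > s (lam s) = 2 P ≥ P contradicts h
  nlinarith [mul_lt_mul_of_pos_right hst hpos, mul_le_mul_of_nonneg_left hgap.le hs0]

theorem norm_sub_le_of_coercive {E : Type*} [NormedAddCommGroup E] [InnerProductSpace ℝ E]
    (A : E →ₗ[ℝ] E) {lamlo lamhi : ℝ} (hlamlo : 0 < lamlo)
    (hcoer : ∀ h, lamlo * ‖h‖ ^ 2 ≤ inner ℝ (A h) h) (hbdd : ∀ h, ‖A h‖ ≤ lamhi * ‖h‖)
    {u v g : E} {W P : ℝ} (hW : 0 ≤ W) (hP : 0 ≤ P)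
    (h : inner ℝ (A u) (u - v) ≤ inner ℝ (A g) (u - v) + W * ‖u - v‖ + P) :
    ‖u - g‖ ≤ √(2 / lamlo * P) + 1 / lamlo * (W + (lamhi + lamlo) * ‖v - g‖) := by
  have hcs : inner ℝ (A g) (u - v) - inner ℝ (A v) (u - v) ≤ ‖A (g - v)‖ * ‖u - v‖ := by
    rw [← inner_sub_left, ← map_sub]
    exact real_inner_le_norm _ _
  have hcoer' : lamlo * ‖u - v‖ ^ 2 ≤ inner ℝ (A u) (u - v) - inner ℝ (A v) (u - v) := by
    rw [← inner_sub_left, ← map_sub]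
    exact hcoer (u - v)
  have huv := le_sqrt_add_div_of_mul_sq_le hlamlo (by positivity) hP
    (by linarith : lamlo * ‖u - v‖ ^ 2 ≤ P + (W + ‖A (g - v)‖) * ‖u - v‖)
  have hAgv : (W + ‖A (g - v)‖) / lamlo ≤ (W + lamhi * ‖v - g‖) / lamlo := by
    gcongr
    exact norm_sub_rev g v ▸ hbdd (g - v)
  calc ‖u - g‖ ≤ ‖u - v‖ + ‖v - g‖ := norm_sub_le_norm_sub_add_norm_sub u v g
    _ ≤ √(2 / lamlo * P) + (W + lamhi * ‖v - g‖) / lamlo + ‖v - g‖ := by gcongr; linarith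
    _ = √(2 / lamlo * P) + 1 / lamlo * (W + (lamhi + lamlo) * ‖v - g‖) := by
      field_simp; ring

namespace Matrix

variable {Ω : Type*} [MeasurableSpace Ω] {μ : Measure Ω} {n : Type*} [Fintype n] [DecidableEq n]

theorem aestronglyMeasurable_toEuclideanLin_apply {Λ : Ω → Matrix n n ℝ}
    (hΛ : Measurable fun x i j => Λ x i j) {H : Ω → EuclideanSpace ℝ n}
    (hH : AEStronglyMeasurable H μ) :
    AEStronglyMeasurable (fun x => (Λ x).toEuclideanLin (H x)) μ := by
  have hcont : Continuous fun q : (n → n → ℝ) × EuclideanSpace ℝ n =>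
      WithLp.toLp 2 (Matrix.of q.1 *ᵥ WithLp.ofLp q.2) :=
    (PiLp.continuous_toLp 2 _).comp
      (continuous_fst.matrix_mulVec ((PiLp.continuous_ofLp 2 _).comp continuous_snd))
  exact hcont.comp_aestronglyMeasurable (hΛ.aestronglyMeasurable.prodMk hH)

theorem memLp_toEuclideanLin_apply {p : ℝ≥0∞} {Λ : Ω → Matrix n n ℝ}
    (hΛ : Measurable fun x i j => Λ x i j) {C : ℝ}
    (hC : ∀ᵐ x ∂μ, ∀ ξ, ‖(Λ x).toEuclideanLin ξ‖ ≤ C * ‖ξ‖) (H : Lp (EuclideanSpace ℝ n) p μ) :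
    MemLp (fun x => (Λ x).toEuclideanLin (H x)) p μ :=
  (Lp.memLp H).of_le_mul (aestronglyMeasurable_toEuclideanLin_apply hΛ (Lp.aestronglyMeasurable H))
    (hC.mono fun x hx => hx (H x))

variable {p : ℝ≥0∞} {Λ : Ω → Matrix n n ℝ} (hΛ : Measurable fun x i j => Λ x i j)
  {C : ℝ} (hC : ∀ᵐ x ∂μ, ∀ ξ, ‖(Λ x).toEuclideanLin ξ‖ ≤ C * ‖ξ‖)

noncomputable def lpMulVec : Lp (EuclideanSpace ℝ n) p μ →ₗ[ℝ] Lp (EuclideanSpace ℝ n) p μ where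
  toFun H := (memLp_toEuclideanLin_apply hΛ hC H).toLp _
  map_add' H K := by
    rw [← MemLp.toLp_add]
    refine MemLp.toLp_congr _ _ ?_
    filter_upwards [Lp.coeFn_add H K] with x hx
    rw [hx, Pi.add_apply, map_add, Pi.add_apply]
  map_smul' c H := by
    rw [← MemLp.toLp_const_smul]
    refine MemLp.toLp_congr _ _ ?_
    filter_upwards [Lp.coeFn_smul c H] with x hx
    rw [hx, Pi.smul_apply, map_smul, Pi.smul_apply, RingHom.id_apply]

theorem coeFn_lpMulVec (H : Lp (EuclideanSpace ℝ n) p μ) :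
    lpMulVec hΛ hC H =ᵐ[μ] fun x => (Λ x).toEuclideanLin (H x) :=
  (memLp_toEuclideanLin_apply hΛ hC H).coeFn_toLp

theorem norm_lpMulVec_le (H : Lp (EuclideanSpace ℝ n) p μ) : ‖lpMulVec hΛ hC H‖ ≤ C * ‖H‖ :=
  Lp.norm_le_mul_norm_of_ae_le_mul <| (coeFn_lpMulVec hΛ hC H).mp <| hC.mono fun x hx hAx =>
    hAx ▸ hx (H x)

theorem inner_lpMulVec_eq_integral (H K : Lp (EuclideanSpace ℝ n) 2 μ) :
    inner ℝ (lpMulVec hΛ hC H) K = ∫ x, inner ℝ ((Λ x).toEuclideanLin (H x)) (K x) ∂μ := by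
  rw [L2.inner_def]
  exact integral_congr_ae <| (coeFn_lpMulVec hΛ hC H).mono fun x hx => congrArg (inner ℝ · (K x)) hx

theorem mul_norm_sq_le_inner_lpMulVec {c : ℝ}
    (hcoer : ∀ᵐ x ∂μ, ∀ ξ, c * ‖ξ‖ ^ 2 ≤ inner ℝ ((Λ x).toEuclideanLin ξ) ξ)
    (H : Lp (EuclideanSpace ℝ n) 2 μ) : c * ‖H‖ ^ 2 ≤ inner ℝ (lpMulVec hΛ hC H) H := by
  rw [← real_inner_self_eq_norm_sq, L2.inner_def, ← integral_const_mul, L2.inner_def]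
  refine integral_mono_ae ((L2.integrable_inner H H).const_mul c) (L2.integrable_inner _ H) ?_
  filter_upwards [hcoer, coeFn_lpMulVec hΛ hC H] with x hx hAx
  rw [hAx, real_inner_self_eq_norm_sq]
  exact hx (H x)

end Matrix

theorem MeasureTheory.L2.real_inner_eq_integral_mul_s6 {α : Type*} [MeasurableSpace α] {μ : Measure α}
    (f g : Lp ℝ 2 μ) : inner ℝ f g = ∫ x, f x * g x ∂μ := by
  rw [L2.inner_def]
  simp only [RCLike.inner_apply, conj_trivial, mul_comm]

theorem MeasureTheory.L2.real_inner_sub_eq_integral_s6 {α : Type*} [MeasurableSpace α]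
    {μ : Measure α} (f g h : Lp ℝ 2 μ) : inner ℝ f (g - h) = ∫ x, f x * (g x - h x) ∂μ := by
  rw [L2.real_inner_eq_integral_mul_s6]
  exact integral_congr_ae <| (Lp.coeFn_sub g h).mono fun x hx => congrArg (f x * ·) hx

theorem MeasureTheory.L2.integral_inner_sub_mul_eq {α E : Type*} [MeasurableSpace α]
    {μ : Measure α} [NormedAddCommGroup E] [InnerProductSpace ℝ E] (H K : Lp E 2 μ) {k : α → E}
    (hk : K =ᵐ[μ] k) (f g : Lp ℝ 2 μ) :
    ∫ x, (inner ℝ (H x) (k x) - f x * g x) ∂μ = inner ℝ K H - inner ℝ g f := by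
  have hHk : (fun x => inner ℝ (H x) (k x)) =ᵐ[μ] fun x => inner ℝ (K x) (H x) :=
    hk.mono fun x hx => by dsimp only; rw [← hx, real_inner_comm]
  have hfg : Integrable (fun x => f x * g x) μ := (Lp.memLp f).integrable_mul (Lp.memLp g)
  rw [integral_sub ((L2.integrable_inner K H).congr hHk.symm) hfg, integral_congr_ae hHk,
    ← L2.inner_def, ← L2.real_inner_eq_integral_mul_s6, real_inner_comm f g]

theorem integral_mul_sub_nonneg_of_signorini {B : Type*} [MeasurableSpace B] {ν : Measure B}
    {Γ₁ Γ₂ Γ₃ : Set B} (hΓunion : Γ₁ ∪ Γ₂ ∪ Γ₃ = Set.univ) {a b phi t : B → ℝ}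
    (hsig : ∀ᵐ x ∂ν, (x ∈ Γ₁ → b x = 0) ∧ (x ∈ Γ₂ → phi x = 0) ∧
        (x ∈ Γ₃ → b x ≤ a x ∧ phi x ≤ 0 ∧ phi x * (a x - b x) = 0))
    (ht₁ : ∀ᵐ x ∂ν, x ∈ Γ₁ → t x = 0) (ht₃ : ∀ᵐ x ∂ν, x ∈ Γ₃ → t x ≤ a x) :
    0 ≤ ∫ x, phi x * (t x - b x) ∂ν := by
  refine integral_nonneg_of_ae ?_
  filter_upwards [hsig, ht₁, ht₃] with x ⟨hb₁, hphi₂, hsig₃⟩ ht₁ ht₃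
  have hx : x ∈ Γ₁ ∪ Γ₂ ∪ Γ₃ := hΓunion ▸ Set.mem_univ x
  rcases hx with (hx | hx) | hx
  · simp [ht₁ hx, hb₁ hx]
  · simp [hphi₂ hx]
  · obtain ⟨-, hphi, hcompl⟩ := hsig₃ hx
    -- φ (t - b) = φ (t - a) + φ (a - b), where φ (a - b) = 0 and φ ≤ 0 ≤ a - t
    show 0 ≤ phi x * (t x - b x)
    nlinarith [mul_nonneg (neg_nonneg.mpr hphi) (sub_nonneg.mpr (ht₃ hx))]

theorem inner_sub_le_integral_of_signorini {B : Type*} [MeasurableSpace B] {ν : Measure B}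
    {Γ₁ Γ₂ Γ₃ : Set B} (hΓunion : Γ₁ ∪ Γ₂ ∪ Γ₃ = Set.univ) {a b phi : Lp ℝ 2 ν}
    (hsig : ∀ᵐ x ∂ν, (x ∈ Γ₁ → b x = 0) ∧ (x ∈ Γ₂ → phi x = 0) ∧
        (x ∈ Γ₃ → b x ≤ a x ∧ phi x ≤ 0 ∧ phi x * (a x - b x) = 0))
    {t : Lp ℝ 2 ν} (ht₁ : ∀ᵐ x ∂ν, x ∈ Γ₁ → t x = 0) (ht₃ : ∀ᵐ x ∂ν, x ∈ Γ₃ → t x ≤ a x)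
    (s : Lp ℝ 2 ν) : inner ℝ phi (s - t) ≤ ∫ x, phi x * (s x - b x) ∂ν := by
  have ht := integral_mul_sub_nonneg_of_signorini hΓunion hsig ht₁ ht₃
  rw [← L2.real_inner_sub_eq_integral_s6] at ht ⊢
  have : inner ℝ phi (s - t) = inner ℝ phi (s - b) - inner ℝ phi (t - b) := by
    rw [← inner_sub_right, sub_sub_sub_cancel_right]
  linarith

theorem LinearMap.exists_abs_le_mul_norm_of_injective_s6 {X E : Type*} [AddCommGroup X] [Module ℝ X]
    [FiniteDimensional ℝ X] [NormedAddCommGroup E] [NormedSpace ℝ E] {g : X →ₗ[ℝ] E}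
    (hg : Function.Injective g) (F : X →ₗ[ℝ] ℝ) : ∃ C, 0 ≤ C ∧ ∀ v, |F v| ≤ C * ‖g v‖ := by
  let e : X ≃ₗ[ℝ] LinearMap.range g := LinearEquiv.ofInjective g hg
  let ℓ : LinearMap.range g →L[ℝ] ℝ := LinearMap.toContinuousLinearMap (F ∘ₗ e.symm.toLinearMap)
  refine ⟨‖ℓ‖, norm_nonneg ℓ, fun v => ?_⟩
  have hℓ : ℓ (e v) = F v := by simp [ℓ]
  have he : ‖e v‖ = ‖g v‖ := rfl
  rw [← hℓ, ← he, ← Real.norm_eq_abs]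
  exact ℓ.le_opNorm (e v)

theorem LinearMap.abs_apply_le_iSup_mul_norm {X E : Type*} [AddCommGroup X] [Module ℝ X]
    [FiniteDimensional ℝ X] [NormedAddCommGroup E] [NormedSpace ℝ E] {g : X →ₗ[ℝ] E}
    (hg : Function.Injective g) (F : X →ₗ[ℝ] ℝ) (v : X) :
    |F v| ≤ (⨆ w : {w : X // w ≠ 0}, |F w| / ‖g w‖) * ‖g v‖ := by
  rcases eq_or_ne v 0 with rfl | hv
  · simp
  obtain ⟨C, hC₀, hC⟩ := exists_abs_le_mul_norm_of_injective_s6 hg F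
  have hgv : 0 < ‖g v‖ := norm_pos_iff.mpr ((map_ne_zero_iff g hg).mpr hv)
  have hbdd : BddAbove (Set.range fun w : {w : X // w ≠ 0} => |F w| / ‖g w‖) :=
    ⟨C, Set.forall_mem_range.mpr fun w => div_le_of_le_mul₀ (norm_nonneg _) hC₀ (hC w)⟩
  rw [← div_le_iff₀ hgv]
  exact le_ciSup hbdd ⟨v, hv⟩

theorem signorini_gradient_scheme_gradient_error_estimate_general
    {Ω : Type*} [MeasurableSpace Ω] (μ : Measure Ω)
    {B : Type*} [MeasurableSpace B] (ν : Measure B)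
    (Γ₁ Γ₂ Γ₃ : Set B)
    (hΓunion : Γ₁ ∪ Γ₂ ∪ Γ₃ = Set.univ)
    (d : ℕ)
    (X : Type*) [AddCommGroup X] [Module ℝ X] [FiniteDimensional ℝ X]
    (Pi : X →ₗ[ℝ] Lp ℝ 2 μ)
    (T : X →ₗ[ℝ] Lp ℝ 2 ν)
    (gradD : X →ₗ[ℝ] Lp (EuclideanSpace ℝ (Fin d)) 2 μ)
    (hgradD : Function.Injective gradD)
    (hT₁ : ∀ v : X, ∀ᵐ x ∂ν, x ∈ Γ₁ → (T v) x = 0)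
    (Λ : Ω → Matrix (Fin d) (Fin d) ℝ) (hΛmeas : Measurable fun x i j => Λ x i j)
    (lamlo lamhi : ℝ) (hlamlo : 0 < lamlo) (hlam : lamlo ≤ lamhi)
    (hΛ : ∀ᵐ x ∂μ, (Λ x).IsSymm ∧ ∀ ξ : EuclideanSpace ℝ (Fin d),
        lamlo * ‖ξ‖ ^ 2 ≤ (inner ℝ (Matrix.toEuclideanLin (Λ x) ξ) ξ : ℝ) ∧
        (inner ℝ (Matrix.toEuclideanLin (Λ x) ξ) ξ : ℝ) ≤ lamhi * ‖ξ‖ ^ 2)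
    (f uBar : Lp ℝ 2 μ) (G : Lp (EuclideanSpace ℝ (Fin d)) 2 μ)
    (a b phi : Lp ℝ 2 ν)
    (hsig : ∀ᵐ x ∂ν, (x ∈ Γ₁ → b x = 0) ∧ (x ∈ Γ₂ → phi x = 0) ∧
        (x ∈ Γ₃ → b x ≤ a x ∧ phi x ≤ 0 ∧ phi x * (a x - b x) = 0))
    (KD : Set X)
    (hKD : KD = {v : X | ∀ᵐ x ∂ν, x ∈ Γ₃ → (T v) x ≤ a x})
    (u : X) (hu : u ∈ KD)
    (hscheme : ∀ v ∈ KD,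
      ∫ x, (inner ℝ (Matrix.toEuclideanLin (Λ x) ((gradD u) x)) ((gradD (u - v)) x) : ℝ) ∂μ
        ≤ ∫ x, (f x) * ((Pi (u - v)) x) ∂μ)
    (vD : X) (hvD : vD ∈ KD) :
    ‖gradD u - G‖ ≤
      Real.sqrt ((2 / lamlo) * max 0 (∫ y, phi y * ((T vD) y - b y) ∂ν))
        + (1 / lamlo) *
          ((⨆ v : {v : X // v ≠ 0},
                |(∫ x, ((inner ℝ ((gradD v.1) x) (Matrix.toEuclideanLin (Λ x) (G x)) : ℝ)
                      - (Pi v.1) x * f x) ∂μ)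
                  - ∫ y, phi y * (T v.1) y ∂ν| / ‖gradD v.1‖)
            + (lamhi + lamlo) * (‖Pi vD - uBar‖ + ‖gradD vD - G‖)) := by
  have hlamhi : 0 ≤ lamhi := hlamlo.le.trans hlam
  have hbound : ∀ᵐ x ∂μ, ∀ ξ, ‖(Λ x).toEuclideanLin ξ‖ ≤ lamhi * ‖ξ‖ :=
    hΛ.mono fun x ⟨hsymm, hξ⟩ => Matrix.norm_toEuclideanLin_apply_le hsymm hlamhi
      (fun ξ => (mul_nonneg hlamlo.le (sq_nonneg _)).trans (hξ ξ).1) fun ξ => (hξ ξ).2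
  set A := Matrix.lpMulVec hΛmeas hbound
  set F : X →ₗ[ℝ] ℝ := (innerSL ℝ (A G) : _ →ₗ[ℝ] ℝ) ∘ₗ gradD
    - (innerSL ℝ f : _ →ₗ[ℝ] ℝ) ∘ₗ Pi - (innerSL ℝ phi : _ →ₗ[ℝ] ℝ) ∘ₗ T with hFdef
  have hF (v : X) : (∫ x, ((inner ℝ ((gradD v) x) (Matrix.toEuclideanLin (Λ x) (G x)) : ℝ)
      - (Pi v) x * f x) ∂μ) - ∫ y, phi y * (T v) y ∂ν = F v := by
    rw [L2.integral_inner_sub_mul_eq _ (A G) (Matrix.coeFn_lpMulVec hΛmeas hbound G),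
      ← L2.real_inner_eq_integral_mul_s6]
    simp [hFdef]
  simp only [hF]
  have hdefect := LinearMap.abs_apply_le_iSup_mul_norm hgradD F (u - vD)
  set W := ⨆ v : {v : X // v ≠ 0}, |F v| / ‖gradD v‖
  set P := max 0 (∫ y, phi y * ((T vD) y - b y) ∂ν)
  have hbdry : -inner ℝ phi (T (u - vD)) ≤ P := by
    rw [hKD] at hu
    rw [← inner_neg_right, ← map_neg, neg_sub, map_sub]
    exact (inner_sub_le_integral_of_signorini hΓunion hsig (hT₁ u) hu _).trans (le_max_right _ _)
  have hsch : inner ℝ (A (gradD u)) (gradD (u - vD)) ≤ inner ℝ f (Pi (u - vD)) := by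
    rw [Matrix.inner_lpMulVec_eq_integral, L2.real_inner_eq_integral_mul_s6]
    exact hscheme vD hvD
  have hFw : F (u - vD) = inner ℝ (A G) (gradD (u - vD)) - inner ℝ f (Pi (u - vD))
      - inner ℝ phi (T (u - vD)) := by simp [hFdef]
  calc ‖gradD u - G‖ ≤ √(2 / lamlo * P) + 1 / lamlo * (W + (lamhi + lamlo) * ‖gradD vD - G‖) := by
        refine norm_sub_le_of_coercive A hlamlo
          (Matrix.mul_norm_sq_le_inner_lpMulVec hΛmeas hbound (hΛ.mono fun x hx ξ => (hx.2 ξ).1))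
          (Matrix.norm_lpMulVec_le hΛmeas hbound) (Real.iSup_nonneg fun _ => by positivity)
          (le_max_left _ _) ?_
        rw [← map_sub]
        linarith [neg_abs_le (F (u - vD))]
    _ ≤ _ := by
        gcongr
        exact le_add_of_nonneg_left (norm_nonneg _)

/-- **Estimate (2.7) of Theorem 2.4** (Signorini problem, `L²`-boundary setting,
gradient error estimate): for every `v_D ∈ K_D`, the gradient-scheme solution `u`
satisfies `‖∇_D u - G‖ ≤ sqrt((2/λ̲) G_D(ū,v_D)⁺) + (1/λ̲)[W + (λ̄+λ̲) S_D(ū,v_D)]`. -/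
theorem signorini_gradient_scheme_gradient_error_estimate
    {Ω : Type*} [MeasurableSpace Ω] (μ : Measure Ω)
    {B : Type*} [MeasurableSpace B] (ν : Measure B)
    (Γ₁ Γ₂ Γ₃ : Set B)
    (hΓmeas : MeasurableSet Γ₁ ∧ MeasurableSet Γ₂ ∧ MeasurableSet Γ₃)
    (hΓunion : Γ₁ ∪ Γ₂ ∪ Γ₃ = Set.univ)
    (hΓdisj : Disjoint Γ₁ Γ₂ ∧ Disjoint Γ₁ Γ₃ ∧ Disjoint Γ₂ Γ₃)
    (d : ℕ) (hd : 1 ≤ d)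
    (X : Type*) [AddCommGroup X] [Module ℝ X] [FiniteDimensional ℝ X] [Nontrivial X]
    (Pi : X →ₗ[ℝ] Lp ℝ 2 μ)
    (T : X →ₗ[ℝ] Lp ℝ 2 ν)
    (gradD : X →ₗ[ℝ] Lp (EuclideanSpace ℝ (Fin d)) 2 μ)
    (hgradD : Function.Injective gradD)
    (hT₁ : ∀ v : X, ∀ᵐ x ∂ν, x ∈ Γ₁ → (T v) x = 0)
    (Λ : Ω → Matrix (Fin d) (Fin d) ℝ) (hΛmeas : Measurable fun x i j => Λ x i j)
    (lamlo lamhi : ℝ) (hlamlo : 0 < lamlo) (hlam : lamlo ≤ lamhi)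
    (hΛ : ∀ᵐ x ∂μ, (Λ x).IsSymm ∧ ∀ ξ : EuclideanSpace ℝ (Fin d),
        lamlo * ‖ξ‖ ^ 2 ≤ (inner ℝ (Matrix.toEuclideanLin (Λ x) ξ) ξ : ℝ) ∧
        (inner ℝ (Matrix.toEuclideanLin (Λ x) ξ) ξ : ℝ) ≤ lamhi * ‖ξ‖ ^ 2)
    (f uBar : Lp ℝ 2 μ) (G : Lp (EuclideanSpace ℝ (Fin d)) 2 μ)
    (a b phi : Lp ℝ 2 ν)
    (hsig : ∀ᵐ x ∂ν, (x ∈ Γ₁ → b x = 0) ∧ (x ∈ Γ₂ → phi x = 0) ∧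
        (x ∈ Γ₃ → b x ≤ a x ∧ phi x ≤ 0 ∧ phi x * (a x - b x) = 0))
    (KD : Set X)
    (hKD : KD = {v : X | ∀ᵐ x ∂ν, x ∈ Γ₃ → (T v) x ≤ a x})
    (hKDne : KD.Nonempty)
    (u : X) (hu : u ∈ KD)
    (hscheme : ∀ v ∈ KD,
      ∫ x, (inner ℝ (Matrix.toEuclideanLin (Λ x) ((gradD u) x)) ((gradD (u - v)) x) : ℝ) ∂μ
        ≤ ∫ x, (f x) * ((Pi (u - v)) x) ∂μ)
    (vD : X) (hvD : vD ∈ KD) :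
    ‖gradD u - G‖ ≤
      Real.sqrt ((2 / lamlo) * max 0 (∫ y, phi y * ((T vD) y - b y) ∂ν))
        + (1 / lamlo) *
          ((⨆ v : {v : X // v ≠ 0},
                |(∫ x, ((inner ℝ ((gradD v.1) x) (Matrix.toEuclideanLin (Λ x) (G x)) : ℝ)
                      - (Pi v.1) x * f x) ∂μ)
                  - ∫ y, phi y * (T v.1) y ∂ν| / ‖gradD v.1‖)
            + (lamhi + lamlo) * (‖Pi vD - uBar‖ + ‖gradD vD - G‖)) :=
  signorini_gradient_scheme_gradient_error_estimate_general μ ν Γ₁ Γ₂ Γ₃ hΓunion d X Pi T gradD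
    hgradD hT₁ Λ hΛmeas lamlo lamhi hlamlo hlam hΛ f uBar G a b phi hsig KD hKD u hu hscheme vD hvD
end

section
/- Stampacchia-type lemma used in the proofs of Theorems 2.8 and 2.9: let n ≥ 1 and let w : ℝ^n → ℝ be differentiable at every point. Then for Lebesgue-almost every point x of the set {y ∈ ℝ^n : w(y) = 0}, the Fréchet derivative of w at x is zero. -/
/-!
At a Lebesgue density point `x` of a set `s`, the set meets every rescaled ball
`{x} + r • ball v ε` for all small `r > 0`, so every vector is tangent to `s` at `x` and `s` has
the unique differentiability property there. A function that is constant on `s` has derivative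
`0` within `s`, hence by uniqueness its Fréchet derivative vanishes at every density point of `s`.
Almost every point of `s` is a density point (Besicovitch).
-/

open MeasureTheory Metric Set Filter
open scoped Topology Pointwise

section DensityPoint

variable {E : Type*} [NormedAddCommGroup E] [NormedSpace ℝ E] [MeasurableSpace E] [BorelSpace E]
  [FiniteDimensional ℝ E] (μ : Measure E) [μ.IsAddHaarMeasure]

theorem mem_tangentConeAt_of_density_one {s : Set E} {x : E}
    (h : Tendsto (fun r => μ (s ∩ closedBall x r) / μ (closedBall x r)) (𝓝[>] 0) (𝓝 1))
    (v : E) : v ∈ tangentConeAt ℝ s x := by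
  rw [nhds_basis_ball.tangentConeAt_eq_biInter_closure, mem_iInter₂]
  intro ρ hρ
  rw [Metric.mem_closure_iff]
  intro ε hε
  have hmeets : ∀ᶠ r in 𝓝[>] (0 : ℝ), (s ∩ ({x} + r • ball v ε)).Nonempty :=
    Measure.eventually_nonempty_inter_smul_of_density_one μ s x h _ measurableSet_ball
      (measure_ball_pos μ v hε).ne'
  have hsmall : ∀ᶠ r in 𝓝[>] (0 : ℝ), {x} + r • ball v ε ⊆ ball x ρ :=
    nhdsWithin_le_nhds (eventually_singleton_add_smul_subset isBounded_ball (ball_mem_nhds x hρ))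
  obtain ⟨r, ⟨y, hys, hy⟩, hsub, hr⟩ := (hmeets.and (hsmall.and self_mem_nhdsWithin)).exists
  obtain ⟨a, ha, rfl⟩ : ∃ a ∈ ball v ε, y = x + r • a := by
    simp only [singleton_add, image_add_left, mem_preimage, mem_smul_set] at hy
    obtain ⟨a, ha, hax⟩ := hy
    exact ⟨a, ha, by rw [hax, add_neg_cancel_left]⟩
  have hra : r • a ∈ ball (0 : E) ρ := by
    simpa [mem_ball, dist_eq_norm] using hsub ⟨x, rfl, r • a, smul_mem_smul_set ha, rfl⟩
  exact ⟨a, ⟨r⁻¹, mem_univ _, r • a, ⟨hra, hys⟩, inv_smul_smul₀ hr.ne' a⟩, mem_ball'.1 ha⟩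

theorem uniqueDiffWithinAt_of_density_one {s : Set E} {x : E}
    (h : Tendsto (fun r => μ (s ∩ closedBall x r) / μ (closedBall x r)) (𝓝[>] 0) (𝓝 1)) :
    UniqueDiffWithinAt ℝ s x := by
  have hcone : tangentConeAt ℝ s x = univ :=
    eq_univ_of_forall (mem_tangentConeAt_of_density_one μ h)
  exact ⟨by simp only [hcone, Submodule.span_univ, Submodule.top_coe, dense_univ],
    mem_closure_of_nonempty_tangentConeAt (hcone ▸ univ_nonempty)⟩

theorem ae_restrict_uniqueDiffWithinAt (s : Set E) : ∀ᵐ x ∂μ.restrict s, UniqueDiffWithinAt ℝ s x :=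
  (Besicovitch.ae_tendsto_measure_inter_div μ s).mono fun _ ↦ uniqueDiffWithinAt_of_density_one μ

theorem Differentiable.ae_restrict_fderiv_eq_zero_of_eqOn_const {F : Type*} [NormedAddCommGroup F]
    [NormedSpace ℝ F] {f : E → F} (hf : Differentiable ℝ f) {s : Set E} {c : F}
    (hfs : EqOn f (fun _ ↦ c) s) : ∀ᵐ x ∂μ.restrict s, fderiv ℝ f x = 0 := by
  filter_upwards [ae_restrict_uniqueDiffWithinAt μ s] with x hx
  have hfx : f x = c := hfs.closure hf.continuous continuous_const hx.mem_closure
  exact hx.eq (hf x).hasFDerivAt.hasFDerivWithinAt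
    ((hasFDerivWithinAt_const c x s).congr hfs hfx)

end DensityPoint

theorem stampacchia_fderiv_eq_zero_ae_on_zero_set_general
    (n : ℕ)
    (w : EuclideanSpace ℝ (Fin n) → ℝ) (hw : Differentiable ℝ w) :
    ∀ᵐ x ∂(volume.restrict {y : EuclideanSpace ℝ (Fin n) | w y = 0}),
      fderiv ℝ w x = 0 :=
  hw.ae_restrict_fderiv_eq_zero_of_eqOn_const volume fun _ hy ↦ hy

/-- **Stampacchia-type lemma** (used in the proofs of Theorems 2.8 and 2.9): if
`w : ℝⁿ → ℝ` is differentiable at every point, then for Lebesgue-a.e. point `x` of the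
set `{y : w y = 0}`, the Fréchet derivative of `w` at `x` vanishes. -/
theorem stampacchia_fderiv_eq_zero_ae_on_zero_set
    (n : ℕ) (hn : 1 ≤ n)
    (w : EuclideanSpace ℝ (Fin n) → ℝ) (hw : Differentiable ℝ w) :
    ∀ᵐ x ∂(volume.restrict {y : EuclideanSpace ℝ (Fin n) | w y = 0}),
      fderiv ℝ w x = 0 :=
  stampacchia_fderiv_eq_zero_ae_on_zero_set_general n w hw
end

section
/- Piecewise contact integral estimate (the key estimate behind G_D = O(h²) and E_D = O(h²) in Theorems 2.8, 2.9, 6.2 and 6.4): let n ≥ 1, L ≥ 0, C₂ ≥ 0 and h > 0. Let σ₁, …, σ_m be pairwise disjoint Lebesgue-measurable subsets of ℝ^n, each of finite measure and diameter at most h, pick xᵢ ∈ σᵢ for each i, and set Γ = σ₁ ∪ … ∪ σ_m. Let w : ℝ^n → ℝ be differentiable at every point with L-Lipschitz Fréchet derivative and w ≤ 0 on Γ. Let φ ∈ L²(Γ) satisfy φ ≤ 0 a.e. on Γ and φ·w = 0 a.e. on Γ, and let t ∈ L²(Γ) satisfy ‖t − w(xᵢ)‖_{L²(σᵢ)} ≤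 C₂ h² λ(σᵢ)^{1/2} for every i (λ denoting Lebesgue measure). Then |∫_Γ t φ dλ| ≤ (C₂ + L/2) h² ‖φ‖_{L²(Γ)} λ(Γ)^{1/2}. -/
open MeasureTheory

/-!
On each cell split `t = (t - w(xᵢ)) + w(xᵢ)`. The first part is `C₂h²`-small in `L²(σᵢ)`, so
Cauchy–Schwarz bounds its pairing with `φ`. For the second, wherever `φ ≠ 0` the contact condition
gives `w = 0`; since the derivative of a differentiable function vanishes almost everywhere on each
of its level sets, almost every such point is a critical zero of `w`, and the second-order Taylor
bound for a Lipschitz derivative gives `|w(xᵢ)| ≤ (L/2)h²` there. Summing the cell estimates and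
applying the discrete Cauchy–Schwarz inequality `∑ √aᵢ √bᵢ ≤ √(∑ aᵢ) √(∑ bᵢ)` finishes the proof.
-/

section Integrals
variable {α : Type*} [MeasurableSpace α] {μ : Measure α}

theorem L2.norm_eq_sqrt_integral_sq (f : Lp ℝ 2 μ) : ‖f‖ = √(∫ x, f x ^ 2 ∂μ) := by
  rw [norm_eq_sqrt_real_inner, L2.inner_def]
  simp only [RCLike.inner_apply, conj_trivial, sq]

theorem abs_integral_mul_le_sqrt_integral_sq_mul {f g : α → ℝ} (hf : MemLp f 2 μ)
    (hg : MemLp g 2 μ) :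
    |∫ x, f x * g x ∂μ| ≤ √(∫ x, f x ^ 2 ∂μ) * √(∫ x, g x ^ 2 ∂μ) := by
  have hinner : inner ℝ (hf.toLp f) (hg.toLp g) = ∫ x, f x * g x ∂μ := by
    rw [L2.inner_def]
    refine integral_congr_ae ?_
    filter_upwards [hf.coeFn_toLp, hg.coeFn_toLp] with x hfx hgx
    simp [hfx, hgx, mul_comm]
  have hnorm {u : α → ℝ} (hu : MemLp u 2 μ) : ‖hu.toLp u‖ = √(∫ x, u x ^ 2 ∂μ) := by
    rw [L2.norm_eq_sqrt_integral_sq]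
    congr 1
    refine integral_congr_ae ?_
    filter_upwards [hu.coeFn_toLp] with x hx
    rw [hx]
  rw [← hinner, ← hnorm hf, ← hnorm hg]
  exact abs_real_inner_le_norm _ _

theorem integral_abs_le_sqrt_measureReal_mul [IsFiniteMeasure μ] {g : α → ℝ}
    (hg : MemLp g 2 μ) : ∫ x, |g x| ∂μ ≤ √(μ.real Set.univ) * √(∫ x, g x ^ 2 ∂μ) := by
  have h := abs_integral_mul_le_sqrt_integral_sq_mul (memLp_const 1) hg.abs
  simp only [Pi.abs_apply, one_mul, one_pow, integral_const, smul_eq_mul, mul_one, sq_abs] at h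
  exact (le_abs_self _).trans h

theorem abs_setIntegral_mul_le_of_sq_dist_const_le {s : Set α} (hs : μ s ≠ ⊤) {t φ : α → ℝ}
    {c A B : ℝ} (ht : MemLp t 2 (μ.restrict s)) (hφ : MemLp φ 2 (μ.restrict s)) (hA : 0 ≤ A)
    (hB : 0 ≤ B) (htc : ∫ x in s, (t x - c) ^ 2 ∂μ ≤ A ^ 2 * μ.real s)
    (hc : ∀ᵐ x ∂μ.restrict s, φ x ≠ 0 → |c| ≤ B) :
    |∫ x in s, t x * φ x ∂μ| ≤ (A + B) * (√(μ.real s) * √(∫ x in s, φ x ^ 2 ∂μ)) := by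
  have : IsFiniteMeasure (μ.restrict s) := isFiniteMeasure_restrict.2 hs
  have hφint : Integrable φ (μ.restrict s) := hφ.integrable one_le_two
  have hdiff : |∫ x in s, (t x - c) * φ x ∂μ| ≤ A * (√(μ.real s) * √(∫ x in s, φ x ^ 2 ∂μ)) := by
    refine (abs_integral_mul_le_sqrt_integral_sq_mul (ht.sub (memLp_const c)) hφ).trans ?_
    rw [← mul_assoc]
    gcongr
    calc √(∫ x in s, (t x - c) ^ 2 ∂μ) ≤ √(A ^ 2 * μ.real s) := Real.sqrt_le_sqrt htc
      _ = A * √(μ.real s) := by rw [Real.sqrt_mul (sq_nonneg A), Real.sqrt_sq hA]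
  have hconst : |∫ x in s, c * φ x ∂μ| ≤ B * (√(μ.real s) * √(∫ x in s, φ x ^ 2 ∂μ)) := by
    calc |∫ x in s, c * φ x ∂μ| ≤ ∫ x in s, B * |φ x| ∂μ := by
          refine abs_integral_le_integral_abs.trans (integral_mono_ae ?_ ?_ ?_)
          · exact (hφint.const_mul c).abs
          · exact hφint.abs.const_mul B
          · filter_upwards [hc] with x hx
            rw [abs_mul]
            rcases eq_or_ne (φ x) 0 with h0 | h0
            · simp [h0]
            · exact mul_le_mul_of_nonneg_right (hx h0) (abs_nonneg _)
      _ ≤ B * (√(μ.real s) * √(∫ x in s, φ x ^ 2 ∂μ)) := by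
          rw [integral_const_mul, ← measureReal_restrict_apply_univ]
          exact mul_le_mul_of_nonneg_left (integral_abs_le_sqrt_measureReal_mul hφ) hB
  have hsplit : ∫ x in s, t x * φ x ∂μ = ∫ x in s, (t x - c) * φ x ∂μ + ∫ x in s, c * φ x ∂μ := by
    rw [← integral_add]
    · simp only [sub_mul, sub_add_cancel]
    · exact (ht.sub (memLp_const c)).integrable_mul hφ
    · exact hφint.const_mul c
  rw [hsplit, add_mul]
  exact (abs_add_le _ _).trans (add_le_add hdiff hconst)

theorem abs_setIntegral_iUnion_le {ι : Type*} [Fintype ι] {σ : ι → Set α}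
    (hmeas : ∀ i, MeasurableSet (σ i)) (hdisj : Pairwise (Function.onFun Disjoint σ))
    (hfin : ∀ i, μ (σ i) ≠ ⊤) {F g : α → ℝ} (hF : IntegrableOn F (⋃ i, σ i) μ)
    (hg : IntegrableOn (fun x => g x ^ 2) (⋃ i, σ i) μ) {K : ℝ} (hK : 0 ≤ K)
    (hcell : ∀ i, |∫ x in σ i, F x ∂μ| ≤ K * (√(μ.real (σ i)) * √(∫ x in σ i, g x ^ 2 ∂μ))) :
    |∫ x in ⋃ i, σ i, F x ∂μ|
      ≤ K * (√(μ.real (⋃ i, σ i)) * √(∫ x in ⋃ i, σ i, g x ^ 2 ∂μ)) := by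
  rw [integral_iUnion hmeas hdisj hF, integral_iUnion hmeas hdisj hg, tsum_fintype, tsum_fintype,
    measureReal_iUnion_fintype hdisj hmeas hfin]
  calc |∑ i, ∫ x in σ i, F x ∂μ| ≤ ∑ i, |∫ x in σ i, F x ∂μ| := Finset.abs_sum_le_sum_abs _ _
    _ ≤ ∑ i, K * (√(μ.real (σ i)) * √(∫ x in σ i, g x ^ 2 ∂μ)) :=
        Finset.sum_le_sum fun i _ => hcell i
    _ ≤ _ := by
      rw [← Finset.mul_sum]
      exact mul_le_mul_of_nonneg_left (Real.sum_sqrt_mul_sqrt_le _ (fun i => measureReal_nonneg)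
        fun i => integral_nonneg fun x => sq_nonneg _) hK

end Integrals

theorem norm_image_sub_sub_fderiv_le {E F : Type*} [NormedAddCommGroup E] [NormedSpace ℝ E]
    [NormedAddCommGroup F] [NormedSpace ℝ F] {f : E → F} {L : ℝ} (hf : Differentiable ℝ f)
    (hlip : ∀ x y, ‖fderiv ℝ f x - fderiv ℝ f y‖ ≤ L * ‖x - y‖) (x y : E) :
    ‖f y - f x - fderiv ℝ f x (y - x)‖ ≤ L / 2 * ‖y - x‖ ^ 2 := by
  set v := y - x
  let g : ℝ → F := fun s => f (x + s • v) - f x - s • fderiv ℝ f x v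
  have hg (s : ℝ) : HasDerivAt g (fderiv ℝ f (x + s • v) v - fderiv ℝ f x v) s := by
    have hline : HasDerivAt (fun s : ℝ => x + s • v) v s := by
      simpa using ((hasDerivAt_id' s).smul_const v).const_add x
    have hlin : HasDerivAt (fun s : ℝ => s • fderiv ℝ f x v) (fderiv ℝ f x v) s := by
      simpa using (hasDerivAt_id' s).smul_const (fderiv ℝ f x v)
    exact (((hf _).hasFDerivAt.comp_hasDerivAt s hline).sub_const (f x)).sub hlin
  have hg' (s : ℝ) (hs : 0 ≤ s) :
      ‖fderiv ℝ f (x + s • v) v - fderiv ℝ f x v‖ ≤ L * ‖v‖ ^ 2 * s := by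
    calc ‖fderiv ℝ f (x + s • v) v - fderiv ℝ f x v‖
        ≤ ‖fderiv ℝ f (x + s • v) - fderiv ℝ f x‖ * ‖v‖ := by
          rw [← sub_apply]; exact ContinuousLinearMap.le_opNorm _ _
      _ ≤ L * ‖s • v‖ * ‖v‖ := by
          gcongr
          simpa using hlip (x + s • v) x
      _ = L * ‖v‖ ^ 2 * s := by rw [norm_smul, Real.norm_of_nonneg hs]; ring
  have key := image_norm_le_of_norm_deriv_right_le_deriv_boundary (a := 0) (b := 1) (f := g)
    (B := fun s => L / 2 * ‖v‖ ^ 2 * s ^ 2) (B' := fun s => L * ‖v‖ ^ 2 * s)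
    (fun s _ => (hg s).continuousAt.continuousWithinAt) (fun s _ => (hg s).hasDerivWithinAt)
    (by simp [g])
    (fun s => ((hasDerivAt_pow 2 s).const_mul (L / 2 * ‖v‖ ^ 2)).congr_deriv (by ring))
    (fun s hs => hg' s hs.1) (Set.right_mem_Icc.2 zero_le_one)
  simpa [g, v] using key

theorem ae_fderiv_eq_zero_of_eq {E : Type*} [NormedAddCommGroup E] [NormedSpace ℝ E]
    [FiniteDimensional ℝ E] [MeasurableSpace E] [BorelSpace E] (μ : Measure E)
    [μ.IsAddHaarMeasure] {w : E → ℝ} (hw : Differentiable ℝ w) (c : ℝ) :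
    ∀ᵐ x ∂μ, w x = c → fderiv ℝ w x = 0 := by
  rcases subsingleton_or_nontrivial E with hE | hE
  · exact Filter.Eventually.of_forall fun x _ => Subsingleton.elim _ _
  obtain ⟨e, he⟩ := exists_ne (0 : E)
  set Z := w ⁻¹' {c}
  have hZ : MeasurableSet Z := hw.continuous.measurable (measurableSet_singleton c)
  -- `ApproximatesLinearOn.norm_fderiv_sub_le` is about maps `E → E`, so push `w` into `E` along `e`.
  have happrox : ApproximatesLinearOn (fun x => w x • e) (0 : E →L[ℝ] E) Z 0 := by
    intro x hx y hy
    simp [show w x = c from hx, show w y = c from hy]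
  have hderiv := happrox.norm_fderiv_sub_le μ hZ (fun x => (fderiv ℝ w x).smulRight e)
    fun x _ => ((hw x).hasFDerivAt.smul_const e).hasFDerivWithinAt
  rw [ae_restrict_iff' hZ] at hderiv
  filter_upwards [hderiv] with x hx hxZ
  simpa [he] using hx hxZ

theorem ae_abs_le_of_mul_eq_zero {E : Type*} [NormedAddCommGroup E] [NormedSpace ℝ E]
    [FiniteDimensional ℝ E] [MeasurableSpace E] [BorelSpace E] {μ : Measure E}
    [μ.IsAddHaarMeasure] {s : Set E} {w φ : E → ℝ} {L : ℝ} (hw : Differentiable ℝ w)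
    (hlip : ∀ x y, ‖fderiv ℝ w x - fderiv ℝ w y‖ ≤ L * ‖x - y‖)
    (hφw : ∀ᵐ x ∂μ.restrict s, φ x * w x = 0) :
    ∀ᵐ x ∂μ.restrict s, φ x ≠ 0 → ∀ y, |w y| ≤ L / 2 * ‖y - x‖ ^ 2 := by
  filter_upwards [hφw, ae_restrict_of_ae (ae_fderiv_eq_zero_of_eq μ hw 0)]
    with x hφwx hcrit hφx y
  have hwx : w x = 0 := (mul_eq_zero.1 hφwx).resolve_left hφx
  simpa [hwx, hcrit hwx] using norm_image_sub_sub_fderiv_le hw hlip x y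

theorem piecewise_contact_integral_estimate_general
    (n : ℕ) (L C₂ h : ℝ) (hL : 0 ≤ L) (hC₂ : 0 ≤ C₂) (hh : 0 < h)
    (m : ℕ) (σ : Fin m → Set (EuclideanSpace ℝ (Fin n)))
    (hσmeas : ∀ i, MeasurableSet (σ i))
    (hσfin : ∀ i, volume (σ i) < ⊤)
    (hσdiam : ∀ i, EMetric.diam (σ i) ≤ ENNReal.ofReal h)
    (hσdisj : ∀ i j, i ≠ j → Disjoint (σ i) (σ j))
    (xpt : Fin m → EuclideanSpace ℝ (Fin n)) (hxpt : ∀ i, xpt i ∈ σ i)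
    (w : EuclideanSpace ℝ (Fin n) → ℝ) (hw : Differentiable ℝ w)
    (hlip : ∀ x y, ‖fderiv ℝ w x - fderiv ℝ w y‖ ≤ L * ‖x - y‖)
    (phi t : Lp ℝ 2 (volume.restrict (⋃ i, σ i)))
    (hphiw : ∀ᵐ x ∂(volume.restrict (⋃ i, σ i)), phi x * w x = 0)
    (ht : ∀ i, ∫ x in σ i, (t x - w (xpt i)) ^ 2 ∂(volume.restrict (⋃ i, σ i))
        ≤ (C₂ * h ^ 2) ^ 2 * (volume (σ i)).toReal) :
    |∫ x, t x * phi x ∂(volume.restrict (⋃ i, σ i))|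
      ≤ (C₂ + L / 2) * h ^ 2 * ‖phi‖ * Real.sqrt (volume (⋃ i, σ i)).toReal := by
  have hsub : ∀ i, σ i ⊆ ⋃ i, σ i := Set.subset_iUnion σ
  have hcontact := ae_abs_le_of_mul_eq_zero hw hlip hphiw
  have hcell (i : Fin m) : |∫ x in σ i, t x * phi x| ≤ (C₂ * h ^ 2 + L / 2 * h ^ 2) *
      (√(volume.real (σ i)) * √(∫ x in σ i, phi x ^ 2)) := by
    have hres := Measure.restrict_restrict_of_subset (μ := volume) (hsub i)
    have hmem (f : Lp ℝ 2 (volume.restrict (⋃ i, σ i))) : MemLp f 2 (volume.restrict (σ i)) :=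
      hres ▸ (Lp.memLp f).restrict (σ i)
    refine abs_setIntegral_mul_le_of_sq_dist_const_le (hσfin i).ne (c := w (xpt i))
      (hmem t) (hmem phi) (by positivity) (by positivity) (hres ▸ ht i) ?_
    filter_upwards [ae_restrict_of_ae_restrict_of_subset (hsub i) hcontact,
      ae_restrict_mem (hσmeas i)] with x hx hxσ hφx
    have hdist : ‖xpt i - x‖ ≤ h := by
      rw [← dist_eq_norm, ← edist_le_ofReal hh.le]
      exact (Metric.edist_le_ediam_of_mem (hxpt i) hxσ).trans (hσdiam i)
    calc |w (xpt i)| ≤ L / 2 * ‖xpt i - x‖ ^ 2 := hx hφx (xpt i)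
      _ ≤ L / 2 * h ^ 2 := by gcongr
  have hΓ := abs_setIntegral_iUnion_le (F := fun x => t x * phi x) hσmeas
    (fun i j hij => hσdisj i j hij) (fun i => (hσfin i).ne)
    ((Lp.memLp t).integrable_mul (Lp.memLp phi)) (Lp.memLp phi).integrable_sq (by positivity) hcell
  rw [L2.norm_eq_sqrt_integral_sq]
  refine hΓ.trans_eq ?_
  rw [measureReal_def]
  ring

/-- **Piecewise contact integral estimate** (the key estimate behind `G_D = O(h²)` and
`E_D = O(h²)` in Theorems 2.8, 2.9, 6.2 and 6.4).

Let `σ₁, …, σ_m` be pairwise disjoint measurable subsets of `ℝⁿ`, each of finite measure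
and diameter `≤ h`, with chosen points `xᵢ ∈ σᵢ`, and let `Γ = ⋃ᵢ σᵢ`. Let `w` be
differentiable with `L`-Lipschitz Fréchet derivative and `w ≤ 0` on `Γ`. Let
`φ ∈ L²(Γ)` satisfy `φ ≤ 0` and `φ·w = 0` a.e. on `Γ`, and let `t ∈ L²(Γ)` satisfy
`‖t - w(xᵢ)‖_{L²(σᵢ)} ≤ C₂ h² λ(σᵢ)^{1/2}` for every `i`. Then
`|∫_Γ t φ dλ| ≤ (C₂ + L/2) h² ‖φ‖_{L²(Γ)} λ(Γ)^{1/2}`. -/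
theorem piecewise_contact_integral_estimate
    (n : ℕ) (hn : 1 ≤ n) (L C₂ h : ℝ) (hL : 0 ≤ L) (hC₂ : 0 ≤ C₂) (hh : 0 < h)
    (m : ℕ) (σ : Fin m → Set (EuclideanSpace ℝ (Fin n)))
    (hσmeas : ∀ i, MeasurableSet (σ i))
    (hσfin : ∀ i, volume (σ i) < ⊤)
    (hσdiam : ∀ i, EMetric.diam (σ i) ≤ ENNReal.ofReal h)
    (hσdisj : ∀ i j, i ≠ j → Disjoint (σ i) (σ j))
    (xpt : Fin m → EuclideanSpace ℝ (Fin n)) (hxpt : ∀ i, xpt i ∈ σ i)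
    (w : EuclideanSpace ℝ (Fin n) → ℝ) (hw : Differentiable ℝ w)
    (hlip : ∀ x y, ‖fderiv ℝ w x - fderiv ℝ w y‖ ≤ L * ‖x - y‖)
    (hwle : ∀ x ∈ ⋃ i, σ i, w x ≤ 0)
    (phi t : Lp ℝ 2 (volume.restrict (⋃ i, σ i)))
    (hphile : ∀ᵐ x ∂(volume.restrict (⋃ i, σ i)), phi x ≤ 0)
    (hphiw : ∀ᵐ x ∂(volume.restrict (⋃ i, σ i)), phi x * w x = 0)
    (ht : ∀ i, ∫ x in σ i, (t x - w (xpt i)) ^ 2 ∂(volume.restrict (⋃ i, σ i))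
        ≤ (C₂ * h ^ 2) ^ 2 * (volume (σ i)).toReal) :
    |∫ x, t x * phi x ∂(volume.restrict (⋃ i, σ i))|
      ≤ (C₂ + L / 2) * h ^ 2 * ‖phi‖ * Real.sqrt (volume (⋃ i, σ i)).toReal :=
  piecewise_contact_integral_estimate_general n L C₂ h hL hC₂ hh m σ hσmeas hσfin hσdiam hσdisj xpt
    hxpt w hw hlip phi t hphiw ht
end
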